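/- arXiv:1510.08139 — 2 statements merged into one kernel-verified Lean document; each statement's English description precedes it below -/
import Mathlib

section
/- Let m ≥ 3 and let g be the Minkowski bilinear form on ℝ^m. Let v ∈ ℝ^m be a nonzero null vector and P = v^⊥. Define the alternating bilinear form ω₀ on the space P × P of pairs by ω₀((a₁, b₁), (a₂, b₂)) = g(a₁, b₂) − g(a₂, b₁). Then the radical of ω₀ (the set of pairs (a, b) ∈ P × P with ω₀((a, b), (a', b')) = 0 for all (a', b') ∈ P × P) is exactly the two-dimensional subspace spanned by (v, 0) and (0, v). -/
/-! The Minkowski form has diagonal Gram matrix `diag(-1, 1, …, 1)`, hence is nondegenerate, so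
in finite dimension `(v^⊥)^⊥ = ℝ v`. Testing `(a, b)` against the pairs `(0, w)` and `(w, 0)` with
`w ∈ v^⊥` shows that `(a, b)` lies in the radical of `ω₀` iff `a` and `b` are both orthogonal to
all of `v^⊥`, i.e. iff both are multiples of `v`. -/

open Module

/-- The Minkowski bilinear form on `ℝ^m = (Fin m → ℝ)`:
`g(x, y) = −x₀·y₀ + Σ_{i=1}^{m−1} xᵢ·yᵢ`. -/
noncomputable def mink {m : ℕ} (x y : Fin m → ℝ) : ℝ :=
  ∑ i : Fin m, (if (i : ℕ) = 0 then -(x i * y i) else x i * y i)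

/-- The `g`-orthogonal subspace `v^⊥ = {u ∈ ℝ^m : g(v, u) = 0}` of a vector `v`. -/
def minkOrtho {m : ℕ} (v : Fin m → ℝ) : Submodule ℝ (Fin m → ℝ) where
  carrier := {u | mink v u = 0}
  zero_mem' := by
    simp [mink]
  add_mem' := by
    intro a b ha hb
    have h : mink v (a + b) = mink v a + mink v b := by
      simp only [mink, Pi.add_apply, mul_add, neg_add, ← Finset.sum_add_distrib]
      apply Finset.sum_congr rfl
      intro i _
      by_cases h : (i : ℕ) = 0 <;> simp [h]
    simp only [Set.mem_setOf_eq] at *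
    rw [h, ha, hb, add_zero]
  smul_mem' := by
    intro c a ha
    have h : mink v (c • a) = c * mink v a := by
      simp only [mink, Pi.smul_apply, smul_eq_mul, Finset.mul_sum]
      apply Finset.sum_congr rfl
      intro i _
      by_cases h : (i : ℕ) = 0 <;> simp [h] <;> ring
    simp only [Set.mem_setOf_eq] at *
    rw [h, ha, mul_zero]

namespace Submodule

variable {R M : Type*} [Semiring R] [AddCommMonoid M] [Module R M]

theorem mem_span_pair_inl_inr_iff (x : M) (p : M × M) :
    p ∈ span R {(x, 0), (0, x)} ↔ p.1 ∈ R ∙ x ∧ p.2 ∈ R ∙ x := by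
  simp [mem_span_pair, mem_span_singleton, Prod.ext_iff]

theorem coe_mem_span_singleton_iff {N : Submodule R M} {x y : N} :
    (x : M) ∈ R ∙ (y : M) ↔ x ∈ R ∙ y := by
  simp [mem_span_singleton, Subtype.ext_iff]

end Submodule

theorem mink_comm {m : ℕ} (x y : Fin m → ℝ) : mink x y = mink y x := by
  simp only [mink, mul_comm (x _)]

def minkSignature (m : ℕ) (i : Fin m) : ℝ := if (i : ℕ) = 0 then -1 else 1

noncomputable def minkForm (m : ℕ) : LinearMap.BilinForm ℝ (Fin m → ℝ) :=
  (Matrix.diagonal (minkSignature m)).toBilin'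

theorem minkForm_apply {m : ℕ} (x y : Fin m → ℝ) : minkForm m x y = mink x y := by
  simp only [minkForm, Matrix.toBilin'_apply', Matrix.mulVec_diagonal, dotProduct, mink,
    minkSignature]
  refine Finset.sum_congr rfl fun i _ => ?_
  split_ifs <;> ring

theorem minkForm_nondegenerate (m : ℕ) : (minkForm m).Nondegenerate := by
  refine LinearMap.BilinForm.nondegenerate_toBilin'_of_det_ne_zero' _ ?_
  rw [Matrix.det_diagonal]
  exact Finset.prod_ne_zero_iff.mpr fun i _ => by unfold minkSignature; split_ifs <;> norm_num

theorem minkForm_isRefl (m : ℕ) : (minkForm m).IsRefl := fun x y h => by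
  rwa [minkForm_apply, mink_comm, ← minkForm_apply]

theorem minkOrtho_eq_orthogonal {m : ℕ} (v : Fin m → ℝ) :
    minkOrtho v = (minkForm m).orthogonal (ℝ ∙ v) := by
  ext u
  show mink v u = 0 ↔ _
  simp only [LinearMap.BilinForm.mem_orthogonal_iff, Submodule.mem_span_singleton,
    forall_exists_index, forall_apply_eq_imp_iff, LinearMap.map_smul₂, smul_eq_mul]
  rw [minkForm_apply]
  exact ⟨fun h c => by rw [h, mul_zero], fun h => by simpa using h 1⟩

theorem forall_minkOrtho_mink_eq_zero_iff {m : ℕ} {v u : Fin m → ℝ} :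
    (∀ w ∈ minkOrtho v, mink u w = 0) ↔ u ∈ ℝ ∙ v := by
  rw [← LinearMap.BilinForm.orthogonal_orthogonal (minkForm_nondegenerate m) (minkForm_isRefl m)
      (ℝ ∙ v),
    ← minkOrtho_eq_orthogonal]
  exact forall₂_congr fun w _ => by rw [minkForm_apply, mink_comm]

theorem forall_mink_sub_eq_zero_iff {m : ℕ} (S : Submodule ℝ (Fin m → ℝ)) (a b : Fin m → ℝ) :
    (∀ q : S × S, mink a q.2 - mink q.1 b = 0) ↔
      (∀ w ∈ S, mink a w = 0) ∧ (∀ w ∈ S, mink b w = 0) := by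
  have mink_zero : ∀ x : Fin m → ℝ, mink x 0 = 0 := fun x => by simp [mink]
  refine ⟨fun h => ⟨fun w hw => ?_, fun w hw => ?_⟩, fun ⟨ha, hb⟩ q => ?_⟩
  · simpa [mink_comm 0, mink_zero] using h (0, ⟨w, hw⟩)
  · simpa [mink_comm w, mink_zero] using h (⟨w, hw⟩, 0)
  · rw [ha q.2 q.2.2, mink_comm, hb q.1 q.1.2, sub_zero]

theorem omega0_radical_general {m : ℕ}
    (v : Fin m → ℝ)
    (hvnull : mink v v = 0) :
    {p : minkOrtho v × minkOrtho v |
        ∀ q : minkOrtho v × minkOrtho v,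
          mink (p.1 : Fin m → ℝ) (q.2 : Fin m → ℝ)
            - mink (q.1 : Fin m → ℝ) (p.2 : Fin m → ℝ) = 0}
      = ↑(Submodule.span ℝ
          {(((⟨v, hvnull⟩ : minkOrtho v), (0 : minkOrtho v)) :
              minkOrtho v × minkOrtho v),
           (((0 : minkOrtho v), (⟨v, hvnull⟩ : minkOrtho v)) :
              minkOrtho v × minkOrtho v)}) := by
  ext p
  rw [Set.mem_ofPred_eq, SetLike.mem_coe, Submodule.mem_span_pair_inl_inr_iff,
    ← Submodule.coe_mem_span_singleton_iff, ← Submodule.coe_mem_span_singleton_iff,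
    ← forall_minkOrtho_mink_eq_zero_iff, ← forall_minkOrtho_mink_eq_zero_iff]
  exact forall_mink_sub_eq_zero_iff _ _ _

/-- In Minkowski space `ℝ^m` (`m ≥ 3`), let `v` be a nonzero null
vector and `P = v^⊥`.  Define the alternating form `ω₀` on pairs by
`ω₀((a₁,b₁),(a₂,b₂)) = g(a₁,b₂) − g(a₂,b₁)`.  Then the radical of `ω₀` is exactly the
two-dimensional subspace of `P × P` spanned by `(v, 0)` and `(0, v)`. -/
theorem omega0_radical {m : ℕ} (hm : 3 ≤ m)
    (v : Fin m → ℝ)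
    (hvnull : mink v v = 0) (hv : v ≠ 0) :
    {p : minkOrtho v × minkOrtho v |
        ∀ q : minkOrtho v × minkOrtho v,
          mink (p.1 : Fin m → ℝ) (q.2 : Fin m → ℝ)
            - mink (q.1 : Fin m → ℝ) (p.2 : Fin m → ℝ) = 0}
      = ↑(Submodule.span ℝ
          {(((⟨v, hvnull⟩ : minkOrtho v), (0 : minkOrtho v)) :
              minkOrtho v × minkOrtho v),
           (((0 : minkOrtho v), (⟨v, hvnull⟩ : minkOrtho v)) :
              minkOrtho v × minkOrtho v)}) :=
  omega0_radical_general v hvnull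
end

section
/- Let E be a real normed vector space, f : ℝ → ℝ a continuous function, and c : ℝ → E a twice differentiable curve satisfying the pregeodesic equation c''(t) = f(t) • c'(t) for all t ∈ ℝ. Then for all t ∈ ℝ, c(t) = c(0) + (∫₀ᵗ exp(∫₀ˣ f(y) dy) dx) • c'(0). In particular, setting φ(t) = ∫₀ᵗ exp(∫₀ˣ f(y) dy) dx, the curve c is the reparametrization by φ of the affine (geodesic) line t ↦ c(0) + t • c'(0), so reparametrizing c by the inverse of φ yields a curve with vanishing second derivative. -/
/-! With `F t = ∫₀ᵗ f`, the pregeodesic equation says that `exp (-F) • c'` has zero derivative,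
so `c' t = exp (F t) • c' 0`. Hence `c` and `φ • c' 0`, where `φ t = ∫₀ᵗ exp (F x) dx`, have the
same derivative and differ by the constant `c 0`. -/

open Real

section

variable {E : Type*} [NormedAddCommGroup E] [NormedSpace ℝ E]

theorem eq_exp_sub_smul_of_hasDerivAt_smul {f F : ℝ → ℝ} {v : ℝ → E}
    (hF : ∀ t, HasDerivAt F (f t) t) (hv : ∀ t, HasDerivAt v (f t • v t) t) (t : ℝ) :
    v t = exp (F t - F 0) • v 0 := by
  have hderiv_zero : ∀ t, HasDerivAt (fun s ↦ exp (-F s) • v s) 0 t := fun t ↦ by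
    refine ((hF t).neg.exp.smul (hv t)).congr_deriv ?_
    module
  have hconst := is_const_of_deriv_eq_zero (fun s ↦ (hderiv_zero s).differentiableAt)
    (fun s ↦ (hderiv_zero s).deriv) t 0
  calc v t = exp (F t) • exp (-F t) • v t := by rw [smul_smul, ← exp_add]; simp
    _ = exp (F t - F 0) • v 0 := by rw [hconst, smul_smul, ← exp_add, ← sub_eq_add_neg]

theorem eq_add_sub_smul_of_hasDerivAt_smul_const {φ φ' : ℝ → ℝ} {c : ℝ → E} (w : E)
    (hφ : ∀ t, HasDerivAt φ (φ' t) t) (hc : ∀ t, HasDerivAt c (φ' t • w) t) (t : ℝ) :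
    c t = c 0 + (φ t - φ 0) • w := by
  have hderiv_zero : ∀ t, HasDerivAt (fun s ↦ c s - φ s • w) 0 t := fun t ↦
    ((hc t).sub ((hφ t).smul_const w)).congr_deriv (sub_self _)
  have hconst := is_const_of_deriv_eq_zero (fun s ↦ (hderiv_zero s).differentiableAt)
    (fun s ↦ (hderiv_zero s).deriv) t 0
  rw [sub_smul]
  linear_combination (norm := module) hconst

end

/-- Let `E` be a real normed vector space, `f : ℝ → ℝ` continuous and
`c : ℝ → E` a twice differentiable curve satisfying the pregeodesic equation
`c''(t) = f(t) • c'(t)`.  Then for all `t`,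
`c(t) = c(0) + (∫₀ᵗ exp(∫₀ˣ f(y) dy) dx) • c'(0)`;
that is, `c` is the reparametrization by `φ(t) = ∫₀ᵗ exp(∫₀ˣ f(y) dy) dx` of the affine
geodesic line `t ↦ c(0) + t • c'(0)`. -/
theorem pregeodesic_is_reparametrized_geodesic
    {E : Type*} [NormedAddCommGroup E] [NormedSpace ℝ E]
    (f : ℝ → ℝ) (hf : Continuous f)
    (c : ℝ → E)
    (hc : Differentiable ℝ c) (hc' : Differentiable ℝ (deriv c))
    (heq : ∀ t : ℝ, deriv (deriv c) t = f t • deriv c t) :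
    ∀ t : ℝ,
      c t = c 0 + (∫ x in (0:ℝ)..t, Real.exp (∫ y in (0:ℝ)..x, f y)) • deriv c 0 := by
  intro t
  set F : ℝ → ℝ := fun t ↦ ∫ y in (0:ℝ)..t, f y
  have hF : ∀ t, HasDerivAt F (f t) t := fun t ↦ (hf.integral_hasStrictDerivAt 0 t).hasDerivAt
  have hc'' : ∀ t, HasDerivAt (deriv c) (f t • deriv c t) t := fun t ↦
    heq t ▸ (hc' t).hasDerivAt
  have hdc : ∀ t, deriv c t = exp (F t) • deriv c 0 := fun t ↦ by
    simpa [F] using eq_exp_sub_smul_of_hasDerivAt_smul hF hc'' t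
  have hφ : ∀ t, HasDerivAt (fun t ↦ ∫ x in (0:ℝ)..t, exp (F x)) (exp (F t)) t := fun t ↦
    ((continuous_exp.comp (continuous_iff_continuousAt.2 fun s ↦ (hF s).continuousAt))
      |>.integral_hasStrictDerivAt 0 t).hasDerivAt
  simpa using eq_add_sub_smul_of_hasDerivAt_smul_const (deriv c 0) hφ
    (fun t ↦ hdc t ▸ (hc t).hasDerivAt) t
end
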